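/- arXiv:1907.00313 — 3 statements merged into one kernel-verified Lean document; each statement's English description precedes it below -/
import Mathlib

section
/- For the stochastic-rate-constrained UCB algorithm there exists an absolute constant C > 0 (independent of K, T, v, and the reward distributions) such that the regret satisfies the worst-case bound Reg_T ≤ C·( √(T·K·ln T) + K·ln T ). -/
open MeasureTheory ProbabilityTheory Finset

namespace FairBandit

variable {Ω : Type} [MeasurableSpace Ω]

/-- Number of pulls of arm `i` among rounds `1, …, t`. -/
def pullCount {K : ℕ} (arm : ℕ → Ω → Fin K) (i : Fin K) (t : ℕ) (ω : Ω) : ℕ :=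
  ((Finset.Icc 1 t).filter (fun s => arm s ω = i)).card

/-- Empirical mean of arm `i` at round `t`:  average of the first `n_{t-1}(i)`
samples `X i 0, X i 1, …` of arm `i` (the sample `X i k` is observed at the
`(k+1)`-st pull of arm `i`). -/
noncomputable def empMean {K : ℕ} (X : Fin K → ℕ → Ω → ℝ) (arm : ℕ → Ω → Fin K)
    (i : Fin K) (t : ℕ) (ω : Ω) : ℝ :=
  (∑ k ∈ Finset.range (pullCount arm i (t - 1) ω), X i k ω) / (pullCount arm i (t - 1) ω)

/-- Upper confidence bound of arm `i` at round `t`. -/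
noncomputable def ucb {K : ℕ} (T : ℕ) (X : Fin K → ℕ → Ω → ℝ) (arm : ℕ → Ω → Fin K)
    (i : Fin K) (t : ℕ) (ω : Ω) : ℝ :=
  empMean X arm i t ω + 2 * Real.sqrt (Real.log T / (pullCount arm i (t - 1) ω))

/-- Index type for the joint family consisting of all samples of all arms
together with the randomization seeds of rounds `K+1, K+2, …`. -/
def jointβ (K : ℕ) : (Fin K × ℕ) ⊕ ℕ → Type := fun idx =>
  match idx with
  | .inl _ => ℝ
  | .inr _ => Fin (K + 1)

/-- The (discrete/Borel) measurable structure on the joint family. -/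
def jointMS (K : ℕ) : ∀ idx, MeasurableSpace (jointβ K idx) := fun idx =>
  match idx with
  | .inl _ => (inferInstance : MeasurableSpace ℝ)
  | .inr _ => (inferInstance : MeasurableSpace (Fin (K + 1)))

/-- The joint family: sample `X i k` at index `.inl (i, k)` and the
randomization seed `ξ t` of round `t = K + 1 + u > K` at index `.inr u`. -/
def jointF {K : ℕ} (X : Fin K → ℕ → Ω → ℝ) (ξ : ℕ → Ω → Fin (K + 1)) :
    ∀ idx, Ω → jointβ K idx := fun idx =>
  match idx with
  | .inl p => X p.1 p.2
  | .inr u => ξ (K + 1 + u)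

/-- The stochastic bandit environment: for every arm `i` the samples
`X i 0, X i 1, …` take values in `[0,1]`, the samples of each arm are
identically distributed, and the mean of every sample of arm `i` is `μ i`.
(Joint independence is required separately, together with the seeds.) -/
def BanditEnvNoIndep {K : ℕ} (P : Measure Ω) (X : Fin K → ℕ → Ω → ℝ) (μ : Fin K → ℝ) : Prop :=
  (∀ i k, Measurable (X i k)) ∧
  (∀ i k ω, X i k ω ∈ Set.Icc (0 : ℝ) 1) ∧
  (∀ i k, Measure.map (X i k) P = Measure.map (X i 0) P) ∧
  (∀ i k, ∫ ω, X i k ω ∂P = μ i)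

/-- The stochastic-rate-constrained UCB algorithm: rounds `1, …, K` pull each
arm once; at every round `t > K`, the arm `b t` is a maximizer of the UCB
index (ties broken by smallest index), and the pulled arm is `b t` if the
seed `ξ t` equals `K`, and the arm `ξ t` otherwise, where the seed takes the
value `K` with probability `1 - K·v` and each value `i < K` with probability
`v` (so that a uniformly random arm is pulled with probability `K·v`),
independently of everything else (i.e. of all samples and all other seeds). -/
def StochUCB {K : ℕ} (T : ℕ) (v : ℝ) (P : Measure Ω) (X : Fin K → ℕ → Ω → ℝ)
    (ξ : ℕ → Ω → Fin (K + 1)) (b arm : ℕ → Ω → Fin K) : Prop :=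
  (∀ t, Measurable (arm t)) ∧ (∀ t, Measurable (b t)) ∧ (∀ t, Measurable (ξ t)) ∧
  (∀ t ω, 1 ≤ t → t ≤ K → ((arm t ω : ℕ) = t - 1)) ∧
  (∀ t ω, K < t →
    (∀ j, ucb T X arm j t ω ≤ ucb T X arm (b t ω) t ω) ∧
    (∀ j, ucb T X arm j t ω = ucb T X arm (b t ω) t ω → b t ω ≤ j)) ∧
  (∀ t ω, K < t →
    arm t ω = if h : ((ξ t ω : ℕ) < K) then ⟨(ξ t ω : ℕ), h⟩ else b t ω) ∧
  (∀ t, K < t → ∀ j : Fin (K + 1),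
    P {ω | ξ t ω = j} = ENNReal.ofReal (if (j : ℕ) < K then v else 1 - (K : ℝ) * v)) ∧
  iIndepFun (m := jointMS K) (jointF X ξ) P

/-- The benchmark distribution `p*` over arms: `p*(i*) = 1 - K·v + v` and
`p*(i) = v` otherwise. -/
noncomputable def pstar {K : ℕ} (v : ℝ) (istar : Fin K) (i : Fin K) : ℝ :=
  v + (1 - (K : ℝ) * v) * (if i = istar then 1 else 0)

/-- The conditional distribution `p_t` of the pulled arm at round `t` given the
history: `p_t(b_t) = 1 - K·v + v` and `p_t(i) = v` otherwise. -/
noncomputable def pt {K : ℕ} (v : ℝ) (b : ℕ → Ω → Fin K) (t : ℕ) (ω : Ω) (i : Fin K) : ℝ :=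
  v + (1 - (K : ℝ) * v) * (if i = b t ω then 1 else 0)

end FairBandit

open FairBandit MeasureTheory ProbabilityTheory

/-!
The seed of round `t` is independent of the UCB arm `b t`, which is a function of the samples and
of earlier seeds. Hence the expected regret of round `t` is the expected gap of `b t` on the event
that the seed selects `b t`, and the regret is the expected total gap over these exploitation
rounds.

By Hoeffding's inequality and a union bound, outside an event of probability at most
`2 K T · T⁻⁸` every average of `n ≤ T` samples of an arm is within `2 √(ln T / n)` of its mean.
On that event the usual UCB argument shows that an arm `a` chosen in `N a` exploitation rounds has
`Δ a ² · N a ≤ 16 ln T`, and Cauchy–Schwarz with `∑ N a ≤ T` bounds the total gap by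
`4 √(T K ln T)`. Off the event the total gap is at most `T`.
-/

namespace FairBandit

lemma measureReal_le_abs_sum_sub_integral_le {Ω : Type*} [MeasurableSpace Ω] {P : Measure Ω}
    [IsProbabilityMeasure P] {W : ℕ → Ω → ℝ} (hind : iIndepFun W P)
    (hmeas : ∀ k, Measurable (W k)) (hbd : ∀ k ω, W k ω ∈ Set.Icc (0 : ℝ) 1)
    (n : ℕ) {ε : ℝ} (hε : 0 ≤ ε) :
    P.real {ω | ε ≤ |∑ k ∈ range n, (W k ω - P[W k])|} ≤ 2 * Real.exp (-2 * ε ^ 2 / n) := by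
  have hsubG : ∀ k, HasSubgaussianMGF (fun ω => W k ω - P[W k]) ((‖(1 : ℝ) - 0‖₊ / 2) ^ 2) P :=
    fun k => hasSubgaussianMGF_of_mem_Icc (hmeas k).aemeasurable (ae_of_all _ (hbd k))
  have hcenter : iIndepFun (fun k ω => W k ω - P[W k]) P :=
    hind.comp (fun k (y : ℝ) => y - ∫ ω, W k ω ∂P) fun _ => measurable_id.sub_const _
  have hupper := HasSubgaussianMGF.measure_sum_range_ge_le_of_iIndepFun hcenter
    (fun k _ => hsubG k) (n := n) hε
  have hlower := HasSubgaussianMGF.measure_sum_range_ge_le_of_iIndepFun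
    (hcenter.comp (fun _ (y : ℝ) => -y) fun _ => measurable_neg) (fun k _ => (hsubG k).neg)
    (n := n) hε
  have hexp : -ε ^ 2 / (2 * n * ((‖(1 : ℝ) - 0‖₊ / 2) ^ 2 : NNReal)) = -2 * ε ^ 2 / n := by
    norm_num; ring
  rw [hexp] at hupper hlower
  calc P.real {ω | ε ≤ |∑ k ∈ range n, (W k ω - P[W k])|}
      ≤ P.real ({ω | ε ≤ ∑ k ∈ range n, (W k ω - P[W k])} ∪
          {ω | ε ≤ ∑ k ∈ range n, -(W k ω - P[W k])}) := by
        refine measureReal_mono fun ω hω => ?_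
        simp only [Set.mem_ofPred_eq, Set.mem_union, sum_neg_distrib] at hω ⊢
        rcases le_abs'.mp hω with h | h
        · exact Or.inr (by linarith)
        · exact Or.inl h
    _ ≤ _ := (measureReal_union_le _ _).trans (by simpa [two_mul] using add_le_add hupper hlower)

lemma eq_iff_of_first_argmax {ι : Type*} [LinearOrder ι] {f : ι → ℝ} {i : ι}
    (hmax : ∀ j, f j ≤ f i) (hfirst : ∀ j, f j = f i → i ≤ j) (a : ι) :
    i = a ↔ (∀ j, f j ≤ f a) ∧ ∀ j < a, f j < f a := by
  constructor
  · rintro rfl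
    exact ⟨hmax, fun j hj => (hmax j).lt_of_ne fun h => (hfirst j h).not_gt hj⟩
  · rintro ⟨hamax, hafirst⟩
    have hfa : f a = f i := le_antisymm (hmax a) (hamax i)
    refine le_antisymm (hfirst a hfa) (not_lt.mp fun hia => ?_)
    exact (hafirst i hia).ne hfa.symm

lemma measurable_first_argmax {Ω : Type*} {m : MeasurableSpace Ω} {K : ℕ} {f : Fin K → Ω → ℝ}
    {b : Ω → Fin K} (hf : ∀ j, Measurable[m] (f j)) (hmax : ∀ ω j, f j ω ≤ f (b ω) ω)
    (hfirst : ∀ ω j, f j ω = f (b ω) ω → b ω ≤ j) : Measurable[m] b := by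
  refine measurable_to_countable' fun a => ?_
  have hpre : b ⁻¹' {a} = (⋂ j, {ω | f j ω ≤ f a ω}) ∩ ⋂ j, {ω | j < a → f j ω < f a ω} := by
    ext ω
    simp only [Set.mem_preimage, Set.mem_singleton_iff, Set.mem_inter_iff, Set.mem_iInter,
      Set.mem_ofPred_eq]
    exact eq_iff_of_first_argmax (f := fun j => f j ω) (hmax ω) (hfirst ω) a
  rw [hpre]
  refine .inter (.iInter fun j => measurableSet_le (hf j) (hf a)) (.iInter fun j => ?_)
  by_cases hja : j < a
  · simpa only [hja, true_implies] using measurableSet_lt (hf j) (hf a)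
  · simp only [hja, false_implies, Set.ofPred_true, MeasurableSet.univ]

lemma sum_mul_le_sqrt_of_sq_mul_le {ι : Type*} (s : Finset ι) {Δ N : ι → ℝ} {c T : ℝ}
    (hN : ∀ i ∈ s, 0 ≤ N i) (hc : ∀ i ∈ s, Δ i ^ 2 * N i ≤ c)
    (hT : ∑ i ∈ s, N i ≤ T) :
    ∑ i ∈ s, Δ i * N i ≤ Real.sqrt (T * s.card * c) := by
  refine Real.le_sqrt_of_sq_le ?_
  calc (∑ i ∈ s, Δ i * N i) ^ 2 ≤ (∑ i ∈ s, N i) * ∑ i ∈ s, Δ i ^ 2 * N i :=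
        sum_sq_le_sum_mul_sum_of_sq_le_mul s hN (fun i hi => by have := hN i hi; positivity)
          fun i _ => le_of_eq (by ring)
    _ ≤ T * (s.card * c) := by
        have hc' : ∑ i ∈ s, Δ i ^ 2 * N i ≤ s.card * c := by simpa using sum_le_sum hc
        have hsq : 0 ≤ ∑ i ∈ s, Δ i ^ 2 * N i := sum_nonneg fun i hi => by
          have := hN i hi; positivity
        exact mul_le_mul hT hc' hsq ((sum_nonneg hN).trans hT)
    _ = T * s.card * c := by ring

lemma integral_le_add_mul_measureReal_compl {Ω : Type*} [MeasurableSpace Ω] {P : Measure Ω}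
    [IsProbabilityMeasure P] {f : Ω → ℝ} {s : Set Ω} {A B : ℝ} (hs : MeasurableSet s)
    (hf : Integrable f P) (hA : 0 ≤ A) (hfs : ∀ ω ∈ s, f ω ≤ A) (hfB : ∀ ω, f ω ≤ B) :
    ∫ ω, f ω ∂P ≤ A + B * P.real sᶜ := by
  calc ∫ ω, f ω ∂P ≤ ∫ ω, (A + sᶜ.indicator (fun _ => B) ω) ∂P := by
        refine integral_mono hf ((integrable_const A).add ((integrable_const B).indicator hs.compl))
          fun ω => ?_
        by_cases hω : ω ∈ s
        · simpa [hω] using hfs ω hω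
        · simpa [hω] using (hfB ω).trans (le_add_of_nonneg_left hA)
    _ = A + B * P.real sᶜ := by
        rw [integral_add (integrable_const A) ((integrable_const B).indicator hs.compl),
          integral_indicator_const B hs.compl]
        simp [mul_comm]

lemma integrable_comp_of_finite {Ω α : Type*} [MeasurableSpace Ω] {P : Measure Ω}
    [IsFiniteMeasure P] [Finite α] [MeasurableSpace α] [MeasurableSingletonClass α] {f : Ω → α}
    (hf : Measurable f) (g : α → ℝ) : Integrable (fun ω => g (f ω)) P :=
  Integrable.of_finite.comp_measurable hf

lemma integral_mem_Icc_zero_one {Ω : Type*} [MeasurableSpace Ω] {P : Measure Ω}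
    [IsProbabilityMeasure P] {W : Ω → ℝ} (hbd : ∀ ω, W ω ∈ Set.Icc (0 : ℝ) 1) :
    P[W] ∈ Set.Icc (0 : ℝ) 1 :=
  ⟨integral_nonneg fun ω => (hbd ω).1, (integral_mono_of_nonneg (ae_of_all _ fun ω => (hbd ω).1)
    (integrable_const 1) (ae_of_all _ fun ω => (hbd ω).2)).trans (by simp)⟩

lemma mul_exp_neg_eight_mul_log_le {K T : ℕ} (hT : 2 ≤ T) :
    (T : ℝ) * (2 * K * T * Real.exp (-8 * Real.log T)) ≤ K * Real.log T := by
  have hT0 : (0 : ℝ) < T := by positivity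
  have hexp : Real.exp (-8 * Real.log T) = ((T : ℝ) ^ 8)⁻¹ := by
    rw [neg_mul, Real.exp_neg, show (8 : ℝ) = (8 : ℕ) by norm_num, Real.exp_nat_mul,
      Real.exp_log hT0]
  have hlog : (1 / 2 : ℝ) ≤ Real.log T :=
    (show (1 / 2 : ℝ) ≤ Real.log 2 by linarith [Real.log_two_gt_d9]).trans
      (Real.log_le_log (by norm_num) (by exact_mod_cast hT))
  have hT6 : (64 : ℝ) ≤ T ^ 6 := by
    calc (64 : ℝ) = 2 ^ 6 := by norm_num
      _ ≤ T ^ 6 := pow_le_pow_left₀ (by norm_num) (by exact_mod_cast hT) 6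
  rw [hexp, show (T : ℝ) * (2 * K * T * ((T : ℝ) ^ 8)⁻¹) = 2 * K / T ^ 6 by field_simp,
    div_le_iff₀ (by positivity)]
  have hK : (0 : ℝ) ≤ K := K.cast_nonneg
  nlinarith [mul_le_mul hlog hT6 (by norm_num) (by linarith)]

section Algorithm

variable {Ω : Type} {K T : ℕ} {v : ℝ} {X : Fin K → ℕ → Ω → ℝ} {μ : Fin K → ℝ}
  {ξ : ℕ → Ω → Fin (K + 1)} {b arm : ℕ → Ω → Fin K} {istar : Fin K}

lemma pullCount_le (i : Fin K) (t : ℕ) (ω : Ω) : pullCount arm i t ω ≤ t :=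
  (card_filter_le _ _).trans (by simp)

lemma measurable_pullCount {m : MeasurableSpace Ω} {t : ℕ}
    (harm : ∀ s ∈ Icc 1 t, Measurable[m] (arm s)) (i : Fin K) :
    Measurable[m] (pullCount arm i t) := by
  have hsum : pullCount arm i t = fun ω => ∑ s ∈ Icc 1 t, if arm s ω = i then 1 else 0 := by
    funext ω
    exact card_filter _ _
  rw [hsum]
  exact Finset.measurable_sum _ fun s hs =>
    Measurable.ite (harm s hs (measurableSet_singleton i)) measurable_const measurable_const

lemma measurable_ucb {m : MeasurableSpace Ω} {t : ℕ}
    (harm : ∀ s ∈ Icc 1 (t - 1), Measurable[m] (arm s)) (i : Fin K)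
    (hX : ∀ k, Measurable[m] (X i k)) : Measurable[m] (ucb T X arm i t) := by
  let _ : MeasurableSpace Ω := m
  have hg : Measurable fun p : Ω × ℕ =>
      (∑ k ∈ range p.2, X i k p.1) / p.2 + 2 * Real.sqrt (Real.log T / p.2) :=
    measurable_from_prod_countable_left fun n => by
      dsimp only
      exact ((Finset.measurable_sum _ fun k _ => hX k).div_const _).add_const _
  have hucb : ucb T X arm i t = (fun p : Ω × ℕ =>
      (∑ k ∈ range p.2, X i k p.1) / p.2 + 2 * Real.sqrt (Real.log T / p.2)) ∘
        fun ω => (ω, pullCount arm i (t - 1) ω) := rfl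
  rw [hucb]
  exact hg.comp (measurable_id.prodMk (measurable_pullCount harm i))

lemma sum_pstar_mul_sub_sum_pt_mul (t : ℕ) (ω : Ω) :
    ∑ i, pstar v istar i * μ i - ∑ i, pt v b t ω i * μ i
      = (1 - K * v) * (μ istar - μ (b t ω)) := by
  simp only [pstar, pt, add_mul, sum_add_distrib, mul_ite, mul_one, mul_zero, ite_mul,
    zero_mul, sum_ite_eq', mem_univ, if_true, ← mul_sum]
  ring

def exploitRounds (K T : ℕ) (ξ : ℕ → Ω → Fin (K + 1)) (ω : Ω) : Finset ℕ :=
  {t ∈ Icc (K + 1) T | ξ t ω = Fin.last K}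

lemma sum_gap_exploitRounds_le_of_gap_le_one (hgap : ∀ a, μ istar - μ a ≤ 1) (ω : Ω) :
    ∑ t ∈ exploitRounds K T ξ ω, (μ istar - μ (b t ω)) ≤ T :=
  calc ∑ t ∈ exploitRounds K T ξ ω, (μ istar - μ (b t ω))
      ≤ #(exploitRounds K T ξ ω) := by simpa using sum_le_sum fun t _ => hgap (b t ω)
    _ ≤ T := by exact_mod_cast (card_filter_le _ _).trans (by simp)

end Algorithm

section History

variable {Ω : Type} {K : ℕ} {X : Fin K → ℕ → Ω → ℝ} {ξ : ℕ → Ω → Fin (K + 1)}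

def histIdx (K t : ℕ) : Set ((Fin K × ℕ) ⊕ ℕ) :=
  {idx | ∀ u, idx = .inr u → K + 1 + u ≤ t}

/-- Generated by all samples, observed or not, and the seeds of rounds `≤ t`: `b (t + 1)` is
measurable for it, and the seed of round `t + 1` is independent of it. -/
def histMS (X : Fin K → ℕ → Ω → ℝ) (ξ : ℕ → Ω → Fin (K + 1)) (t : ℕ) : MeasurableSpace Ω :=
  ⨆ idx ∈ histIdx K t, (jointMS K idx).comap (jointF X ξ idx)

lemma comap_le_histMS {t : ℕ} {idx : (Fin K × ℕ) ⊕ ℕ} (h : idx ∈ histIdx K t) :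
    (jointMS K idx).comap (jointF X ξ idx) ≤ histMS X ξ t :=
  le_iSup₂ (f := fun idx (_ : idx ∈ histIdx K t) => (jointMS K idx).comap (jointF X ξ idx)) idx h

lemma histMS_mono {t t' : ℕ} (h : t ≤ t') : histMS X ξ t ≤ histMS X ξ t' :=
  iSup₂_le fun _ hidx => comap_le_histMS fun u hu => (hidx u hu).trans h

lemma measurable_X_histMS (i : Fin K) (k t : ℕ) : Measurable[histMS X ξ t] (X i k) :=
  measurable_iff_comap_le.2 (comap_le_histMS (idx := .inl (i, k)) fun _ h => by simp at h)

lemma jointF_inr_sub {t : ℕ} (ht : K < t) : jointF X ξ (.inr (t - (K + 1))) = ξ t := by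
  change ξ (K + 1 + (t - (K + 1))) = ξ t
  congr
  omega

lemma measurable_ξ_histMS {s t : ℕ} (hs : K < s) (hst : s ≤ t) :
    Measurable[histMS X ξ t] (ξ s) := by
  rw [measurable_iff_comap_le, ← jointF_inr_sub (X := X) (ξ := ξ) hs]
  exact comap_le_histMS fun u hu => by cases hu; omega

variable [MeasurableSpace Ω] {T : ℕ} {v : ℝ} {P : Measure Ω} {b arm : ℕ → Ω → Fin K}

lemma measurable_b_histMS_of_arm (hsu : StochUCB T v P X ξ b arm) {t : ℕ} (ht : K < t)
    (harm : ∀ s ∈ Icc 1 (t - 1), Measurable[histMS X ξ (t - 1)] (arm s)) :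
    Measurable[histMS X ξ (t - 1)] (b t) := by
  obtain ⟨-, -, -, -, hargmax, -⟩ := hsu
  exact measurable_first_argmax
    (fun j => measurable_ucb harm j fun k => measurable_X_histMS j k (t - 1))
    (fun ω => (hargmax t ω ht).1) fun ω => (hargmax t ω ht).2

lemma measurable_arm_histMS (hsu : StochUCB T v P X ξ b arm) {t : ℕ} (ht : 1 ≤ t) :
    Measurable[histMS X ξ t] (arm t) := by
  induction t using Nat.strong_induction_on with
  | _ t ih =>
  have ⟨_, _, _, hinit, _, hpull, _⟩ := hsu
  rcases le_or_gt t K with htK | htK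
  · have hconst : arm t = fun _ => ⟨t - 1, by omega⟩ := funext fun ω => Fin.ext (hinit t ω ht htK)
    rw [hconst]
    exact measurable_const
  · have hb : Measurable[histMS X ξ t] (b t) :=
      (measurable_b_histMS_of_arm hsu htK fun s hs =>
        ih s (by grind) (mem_Icc.1 hs).1 |>.mono (histMS_mono (mem_Icc.1 hs).2) le_rfl).mono
        (histMS_mono (Nat.sub_le t 1)) le_rfl
    have harm : arm t = (fun p : Fin (K + 1) × Fin K =>
        if h : (p.1 : ℕ) < K then (⟨p.1, h⟩ : Fin K) else p.2) ∘ fun ω => (ξ t ω, b t ω) :=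
      funext fun ω => hpull t ω htK
    rw [harm]
    exact (measurable_of_countable _).comp ((measurable_ξ_histMS htK le_rfl).prodMk hb)

lemma measurable_b_histMS (hsu : StochUCB T v P X ξ b arm) {t : ℕ} (ht : K < t) :
    Measurable[histMS X ξ (t - 1)] (b t) :=
  measurable_b_histMS_of_arm hsu ht fun _ hs =>
    (measurable_arm_histMS hsu (mem_Icc.1 hs).1).mono (histMS_mono (mem_Icc.1 hs).2) le_rfl

lemma indepFun_b_ξ (hX : ∀ i k, Measurable (X i k)) (hsu : StochUCB T v P X ξ b arm) {t : ℕ}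
    (ht : K < t) : IndepFun (b t) (ξ t) P := by
  have ⟨_, _, hξ, _, _, _, _, hjoint⟩ := hsu
  have hle : ∀ idx, (jointMS K idx).comap (jointF X ξ idx) ≤ ‹MeasurableSpace Ω› := by
    rintro (⟨i, k⟩ | u)
    exacts [(hX i k).comap_le, (hξ _).comap_le]
  have hdisj : Disjoint (histIdx K (t - 1)) {.inr (t - (K + 1))} :=
    Set.disjoint_singleton_right.2 fun h => by have := h _ rfl; omega
  have hindep := indep_iSup_of_disjoint hle ((iIndepFun_iff_iIndep _ _ _).1 hjoint) (μ := P) hdisj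
  rw [_root_.iSup_singleton, jointF_inr_sub ht] at hindep
  exact indep_of_indep_of_le_left hindep (measurable_b_histMS hsu ht).comap_le

lemma iIndepFun_samples (hsu : StochUCB T v P X ξ b arm) (i : Fin K) : iIndepFun (X i) P := by
  obtain ⟨-, -, -, -, -, -, -, hjoint⟩ := hsu
  exact hjoint.precomp (g := fun k => .inl (i, k)) fun _ _ h => by simpa using h

end History

section Concentration

variable {Ω : Type} [MeasurableSpace Ω] {K : ℕ}

def EmpMeansConcentrate (T : ℕ) (X : Fin K → ℕ → Ω → ℝ) (μ : Fin K → ℝ) (ω : Ω) : Prop :=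
  ∀ i, ∀ n ∈ Icc 1 T, |(∑ k ∈ range n, X i k ω) / n - μ i| ≤ 2 * Real.sqrt (Real.log T / n)

lemma measurableSet_empMeansConcentrate {T : ℕ} {X : Fin K → ℕ → Ω → ℝ} {μ : Fin K → ℝ}
    (hX : ∀ i k, Measurable (X i k)) : MeasurableSet {ω | EmpMeansConcentrate T X μ ω} := by
  simp only [EmpMeansConcentrate, Set.ofPred_forall]
  exact .iInter fun i => .iInter fun n => .iInter fun _ => measurableSet_le
    (((Finset.measurable_sum _ fun k _ => hX i k).div_const _).sub_const _).abs measurable_const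

lemma measureReal_empMean_far_le {P : Measure Ω} [IsProbabilityMeasure P] {W : ℕ → Ω → ℝ}
    {m : ℝ} (hind : iIndepFun W P) (hmeas : ∀ k, Measurable (W k))
    (hbd : ∀ k ω, W k ω ∈ Set.Icc (0 : ℝ) 1) (hmean : ∀ k, P[W k] = m) {n : ℕ} (hn : 1 ≤ n)
    {L : ℝ} (hL : 0 ≤ L) :
    P.real {ω | 2 * Real.sqrt (L / n) < |(∑ k ∈ range n, W k ω) / n - m|}
      ≤ 2 * Real.exp (-8 * L) := by
  have hn0 : (0 : ℝ) < n := by exact_mod_cast hn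
  have hε : (2 * n * Real.sqrt (L / n)) ^ 2 / n = 4 * L := by
    rw [mul_pow, Real.sq_sqrt (by positivity)]
    field_simp
    ring
  calc P.real {ω | 2 * Real.sqrt (L / n) < |(∑ k ∈ range n, W k ω) / n - m|}
      ≤ P.real {ω | 2 * n * Real.sqrt (L / n) ≤ |∑ k ∈ range n, (W k ω - P[W k])|} := by
        refine measureReal_mono fun ω hω => ?_
        simp only [Set.mem_ofPred_eq, hmean, sum_sub_distrib, sum_const, card_range,
          nsmul_eq_mul] at hω ⊢
        rw [show (∑ k ∈ range n, W k ω) / n - m = ((∑ k ∈ range n, W k ω) - n * m) / n by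
          field_simp, abs_div, abs_of_pos hn0, lt_div_iff₀ hn0] at hω
        linarith
    _ ≤ 2 * Real.exp (-2 * (2 * n * Real.sqrt (L / n)) ^ 2 / n) :=
        measureReal_le_abs_sum_sub_integral_le hind hmeas hbd n (by positivity)
    _ = 2 * Real.exp (-8 * L) := by
        rw [mul_div_assoc, hε]
        ring_nf

lemma measureReal_not_empMeansConcentrate_le {P : Measure Ω} [IsProbabilityMeasure P] {T : ℕ}
    {X : Fin K → ℕ → Ω → ℝ} {μ : Fin K → ℝ} (hind : ∀ i, iIndepFun (X i) P)
    (hX : ∀ i k, Measurable (X i k)) (hbd : ∀ i k ω, X i k ω ∈ Set.Icc (0 : ℝ) 1)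
    (hmean : ∀ i k, P[X i k] = μ i) :
    P.real {ω | ¬ EmpMeansConcentrate T X μ ω} ≤ 2 * K * T * Real.exp (-8 * Real.log T) := by
  have hunion : {ω | ¬ EmpMeansConcentrate T X μ ω} = ⋃ i ∈ (univ : Finset (Fin K)),
      ⋃ n ∈ Icc 1 T,
        {ω | 2 * Real.sqrt (Real.log T / n) < |(∑ k ∈ range n, X i k ω) / n - μ i|} := by
    ext ω
    simp only [EmpMeansConcentrate, not_forall, not_le, exists_prop, Set.mem_ofPred_eq,
      Set.mem_iUnion, mem_univ, true_and]
  rw [hunion]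
  refine (measureReal_biUnion_finset_le _ _).trans ?_
  calc ∑ i : Fin K, P.real (⋃ n ∈ Icc 1 T,
        {ω | 2 * Real.sqrt (Real.log T / n) < |(∑ k ∈ range n, X i k ω) / n - μ i|})
      ≤ ∑ _i : Fin K, ∑ _n ∈ Icc 1 T, 2 * Real.exp (-8 * Real.log T) :=
        sum_le_sum fun i _ => (measureReal_biUnion_finset_le _ _).trans (sum_le_sum fun n hn =>
          measureReal_empMean_far_le (hind i) (hX i) (hbd i) (hmean i) (mem_Icc.1 hn).1
            (Real.log_natCast_nonneg T))
    _ = 2 * K * T * Real.exp (-8 * Real.log T) := by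
        simp only [sum_const, card_univ, Fintype.card_fin, Nat.card_Icc, nsmul_eq_mul]
        push_cast
        ring

end Concentration

section Exploitation

variable {Ω : Type} [MeasurableSpace Ω] {K T : ℕ} {v : ℝ} {P : Measure Ω}
  {X : Fin K → ℕ → Ω → ℝ} {μ : Fin K → ℝ} {ξ : ℕ → Ω → Fin (K + 1)} {b arm : ℕ → Ω → Fin K}
  {istar : Fin K}

lemma arm_val_succ (hsu : StochUCB T v P X ξ b arm) (j : Fin K) (ω : Ω) :
    arm (j + 1) ω = j := by
  obtain ⟨-, -, -, hinit, -⟩ := hsu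
  exact Fin.ext (by simpa using hinit (j + 1) ω (by omega) (by omega))

lemma one_le_pullCount (hsu : StochUCB T v P X ξ b arm) (j : Fin K) {t : ℕ} (ht : K ≤ t)
    (ω : Ω) : 1 ≤ pullCount arm j t ω :=
  card_pos.2 ⟨j + 1, mem_filter.2 ⟨mem_Icc.2 ⟨by omega, by omega⟩, arm_val_succ hsu j ω⟩⟩

lemma gap_le_of_empMeansConcentrate (hsu : StochUCB T v P X ξ b arm) {ω : Ω}
    (hω : EmpMeansConcentrate T X μ ω) {t : ℕ} (ht : K < t) (htT : t ≤ T) :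
    μ istar - μ (b t ω) ≤ 4 * Real.sqrt (Real.log T / pullCount arm (b t ω) (t - 1) ω) := by
  have hconf : ∀ j, |empMean X arm j t ω - μ j| ≤
      2 * Real.sqrt (Real.log T / pullCount arm j (t - 1) ω) := fun j =>
    hω j _ (mem_Icc.2
      ⟨one_le_pullCount hsu j (by omega) ω, (pullCount_le j _ ω).trans (by omega)⟩)
  obtain ⟨-, -, -, -, hargmax, -⟩ := hsu
  have hucb := (hargmax t ω ht).1 istar
  unfold ucb at hucb
  linarith [(abs_le.1 (hconf istar)).1, (abs_le.1 (hconf (b t ω))).2]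

lemma arm_eq_b_of_ξ_eq_last (hsu : StochUCB T v P X ξ b arm) {s : ℕ} (hs : K < s) {ω : Ω}
    (hξ : ξ s ω = Fin.last K) : arm s ω = b s ω := by
  obtain ⟨-, -, -, -, -, hpull, -⟩ := hsu
  rw [hpull s ω hs, dif_neg (by simp [hξ])]

lemma card_exploitRounds_le_pullCount (hsu : StochUCB T v P X ξ b arm) {a : Fin K} {ω : Ω}
    {tm : ℕ} (htm : tm ∈ {t ∈ exploitRounds K T ξ ω | b t ω = a})
    (hmax : ∀ s ∈ {t ∈ exploitRounds K T ξ ω | b t ω = a}, s ≤ tm) :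
    #{t ∈ exploitRounds K T ξ ω | b t ω = a} ≤ pullCount arm a (tm - 1) ω := by
  -- Before `tm`, arm `a` was pulled at round `a + 1` and at every other round of `S`.
  set S := {t ∈ exploitRounds K T ξ ω | b t ω = a}
  have hmem : ∀ s ∈ S, K < s ∧ ξ s ω = Fin.last K ∧ b s ω = a := fun s hs => by
    simp only [S, exploitRounds, mem_filter, mem_Icc] at hs
    exact ⟨by omega, hs.1.2, hs.2⟩
  have hsub : insert ((a : ℕ) + 1) (S.erase tm) ⊆ {s ∈ Icc 1 (tm - 1) | arm s ω = a} := by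
    intro s hs
    rcases mem_insert.1 hs with rfl | hs
    · have := (hmem tm htm).1
      exact mem_filter.2 ⟨mem_Icc.2 ⟨by omega, by omega⟩, arm_val_succ hsu a ω⟩
    · obtain ⟨hsK, hsξ, hsb⟩ := hmem s (mem_of_mem_erase hs)
      have hslt : s < tm := (hmax s (mem_of_mem_erase hs)).lt_of_ne (ne_of_mem_erase hs)
      exact mem_filter.2
        ⟨mem_Icc.2 ⟨by omega, by omega⟩, (arm_eq_b_of_ξ_eq_last hsu hsK hsξ).trans hsb⟩
  have hnotin : (a : ℕ) + 1 ∉ S.erase tm := fun h => by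
    have := (hmem _ (mem_of_mem_erase h)).1
    omega
  have hcard := card_le_card hsub
  rw [card_insert_of_notMem hnotin, card_erase_of_mem htm] at hcard
  have := card_pos.2 ⟨tm, htm⟩
  unfold pullCount
  omega

lemma sq_gap_mul_card_le (hsu : StochUCB T v P X ξ b arm) (hopt : ∀ j, μ j ≤ μ istar) {ω : Ω}
    (hω : EmpMeansConcentrate T X μ ω) (a : Fin K) :
    (μ istar - μ a) ^ 2 * #{t ∈ exploitRounds K T ξ ω | b t ω = a} ≤ 16 * Real.log T := by
  set S := {t ∈ exploitRounds K T ξ ω | b t ω = a}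
  have hL : 0 ≤ Real.log T := Real.log_natCast_nonneg T
  rcases S.eq_empty_or_nonempty with hS | hS
  · simp [S, hS, hL]
  set tm := S.max' hS
  have htm : tm ∈ S := S.max'_mem hS
  have hround : K < tm ∧ tm ≤ T ∧ b tm ω = a := by
    have htm' := htm
    simp only [S, exploitRounds, mem_filter, mem_Icc] at htm'
    exact ⟨by omega, htm'.1.1.2, htm'.2⟩
  obtain ⟨htK, htT, hba⟩ := hround
  have hgap := gap_le_of_empMeansConcentrate (istar := istar) hsu hω htK htT
  rw [hba] at hgap
  set n := pullCount arm a (tm - 1) ω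
  have hn : (0 : ℝ) < n := by exact_mod_cast one_le_pullCount hsu a (by omega) ω
  have hcard : (#S : ℝ) ≤ n := by
    exact_mod_cast card_exploitRounds_le_pullCount hsu htm fun s hs => S.le_max' s hs
  have hsq : (μ istar - μ a) ^ 2 ≤ 16 * (Real.log T / n) := by
    calc (μ istar - μ a) ^ 2 ≤ (4 * Real.sqrt (Real.log T / n)) ^ 2 :=
          pow_le_pow_left₀ (by linarith [hopt a]) hgap 2
      _ = 16 * (Real.log T / n) := by rw [mul_pow, Real.sq_sqrt (by positivity)]; norm_num
  calc (μ istar - μ a) ^ 2 * #S ≤ 16 * (Real.log T / n) * n :=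
        mul_le_mul hsq hcard (by positivity) (by positivity)
    _ = 16 * Real.log T := by field_simp

lemma sum_gap_exploitRounds_le (hsu : StochUCB T v P X ξ b arm) (hopt : ∀ j, μ j ≤ μ istar)
    {ω : Ω} (hω : EmpMeansConcentrate T X μ ω) :
    ∑ t ∈ exploitRounds K T ξ ω, (μ istar - μ (b t ω)) ≤ 4 * Real.sqrt (T * K * Real.log T) := by
  set N : Fin K → ℝ := fun a => #{t ∈ exploitRounds K T ξ ω | b t ω = a}
  have hfiber :
      ∑ t ∈ exploitRounds K T ξ ω, (μ istar - μ (b t ω)) = ∑ a, (μ istar - μ a) * N a := by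
    rw [← sum_fiberwise _ (fun t => b t ω)]
    refine sum_congr rfl fun a _ => ?_
    rw [sum_congr rfl fun t ht => by rw [(mem_filter.1 ht).2], sum_const, nsmul_eq_mul, mul_comm]
  have hN : ∑ a, N a ≤ T := by
    have hcard : #(exploitRounds K T ξ ω) ≤ T := (card_filter_le _ _).trans (by simp)
    simp only [N]
    exact_mod_cast (card_eq_sum_card_fiberwise fun _ _ => mem_univ _).symm.le.trans hcard
  calc ∑ t ∈ exploitRounds K T ξ ω, (μ istar - μ (b t ω))
      = ∑ a, (μ istar - μ a) * N a := hfiber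
    _ ≤ Real.sqrt (T * (univ : Finset (Fin K)).card * (16 * Real.log T)) :=
        sum_mul_le_sqrt_of_sq_mul_le _ (fun a _ => by positivity)
          (fun a _ => sq_gap_mul_card_le hsu hopt hω a) hN
    _ = 4 * Real.sqrt (T * K * Real.log T) := by
        rw [card_univ, Fintype.card_fin, show (T : ℝ) * K * (16 * Real.log T) =
          4 ^ 2 * (T * K * Real.log T) by ring, Real.sqrt_mul' _ (by positivity),
          Real.sqrt_sq (by norm_num), mul_comm]

end Exploitation

section Regret

variable {Ω : Type} [MeasurableSpace Ω] {K T : ℕ} {v : ℝ} {P : Measure Ω}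
  {X : Fin K → ℕ → Ω → ℝ} {μ : Fin K → ℝ} {ξ : ℕ → Ω → Fin (K + 1)} {b arm : ℕ → Ω → Fin K}
  {istar : Fin K}

lemma integral_round_regret (hX : ∀ i k, Measurable (X i k)) (hsu : StochUCB T v P X ξ b arm)
    (hKv : K * v ≤ 1) {t : ℕ} (ht : K < t) :
    ∫ ω, (1 - K * v) * (μ istar - μ (b t ω)) ∂P
      = ∫ ω, (if ξ t ω = Fin.last K then μ istar - μ (b t ω) else 0) ∂P := by
  have ⟨_, hb, hξ, _, _, _, hseed, _⟩ := hsu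
  have hlast_prob : P.real {ω | ξ t ω = Fin.last K} = 1 - K * v := by
    rw [measureReal_def, hseed t ht (Fin.last K)]
    simp [hKv]
  have hprod := (indepFun_b_ξ hX hsu ht).symm.integral_comp_mul_comp
    (f := fun j => if j = Fin.last K then (1 : ℝ) else 0) (g := fun a => μ istar - μ a)
    (hξ t).aemeasurable (hb t).aemeasurable (measurable_of_countable _).aestronglyMeasurable
    (measurable_of_countable _).aestronglyMeasurable
  simp only [Function.comp_def, Pi.mul_apply, boole_mul] at hprod
  have hlast : MeasurableSet {ω | ξ t ω = Fin.last K} := hξ t (measurableSet_singleton _)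
  rw [hprod, integral_const_mul, ← hlast_prob, ← integral_indicator_one hlast]
  congr 1
  exact integral_congr_ae (ae_of_all _ fun ω => by simp [Set.indicator_apply])

lemma integrable_ite_ξ_eq_last (hsu : StochUCB T v P X ξ b arm) [IsFiniteMeasure P] (t : ℕ) :
    Integrable (fun ω => if ξ t ω = Fin.last K then μ istar - μ (b t ω) else 0) P := by
  obtain ⟨-, hb, hξ, -⟩ := hsu
  exact integrable_comp_of_finite ((hξ t).prodMk (hb t))
    fun p : Fin (K + 1) × Fin K => if p.1 = Fin.last K then μ istar - μ p.2 else 0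

lemma integrable_sum_gap_exploitRounds (hsu : StochUCB T v P X ξ b arm) [IsFiniteMeasure P] :
    Integrable (fun ω => ∑ t ∈ exploitRounds K T ξ ω, (μ istar - μ (b t ω))) P := by
  simp only [exploitRounds, sum_filter]
  exact integrable_finsetSum _ fun t _ => integrable_ite_ξ_eq_last hsu t

lemma integral_regret_eq [IsFiniteMeasure P] (hX : ∀ i k, Measurable (X i k))
    (hsu : StochUCB T v P X ξ b arm) (hKv : K * v ≤ 1) :
    ∫ ω, ∑ t ∈ Icc (K + 1) T, (∑ i, pstar v istar i * μ i - ∑ i, pt v b t ω i * μ i) ∂P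
      = ∫ ω, ∑ t ∈ exploitRounds K T ξ ω, (μ istar - μ (b t ω)) ∂P := by
  simp only [sum_pstar_mul_sub_sum_pt_mul, exploitRounds, sum_filter]
  have ⟨_, hb, _⟩ := hsu
  rw [integral_finsetSum _ fun t _ => integrable_comp_of_finite (hb t) fun a =>
      (1 - K * v) * (μ istar - μ a),
    integral_finsetSum _ fun t _ => integrable_ite_ξ_eq_last hsu t]
  exact sum_congr rfl fun t ht => integral_round_regret hX hsu hKv (by grind)

end Regret

end FairBandit

/-- For the stochastic-rate-constrained UCB algorithm there
is an absolute constant `C > 0` such that the regret satisfies the worst-case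
bound `Reg_T ≤ C·(√(T·K·ln T) + K·ln T)`. -/
theorem stoch_ucb_worst_case_regret_bound :
    ∃ C : ℝ, 0 < C ∧
      ∀ (Ω : Type) (_ : MeasurableSpace Ω) (P : Measure Ω), IsProbabilityMeasure P →
      ∀ (K T : ℕ) (v : ℝ) (X : Fin K → ℕ → Ω → ℝ) (μ : Fin K → ℝ) (istar : Fin K)
        (ξ : ℕ → Ω → Fin (K + 1)) (b arm : ℕ → Ω → Fin K),
        2 ≤ K → max K 2 ≤ T → 0 < v → v ≤ 1 / (K : ℝ) →
        BanditEnvNoIndep P X μ → StochUCB T v P X ξ b arm →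
        (∀ j, μ j ≤ μ istar) →
        (∫ ω, (∑ t ∈ Finset.Icc (K + 1) T,
            (∑ i, pstar v istar i * μ i - ∑ i, pt v b t ω i * μ i)) ∂P) ≤
          C * (Real.sqrt ((T : ℝ) * K * Real.log T) + (K : ℝ) * Real.log T) := by
  refine ⟨4, by norm_num, ?_⟩
  intro Ω _ P _ K T v X μ istar ξ b arm hK hT _ hv henv hsu hopt
  obtain ⟨hX, hbd, -, hmean⟩ := henv
  have hT2 : 2 ≤ T := le_of_max_le_right hT
  have hKv : K * v ≤ 1 := by rwa [le_div_iff₀ (by positivity), mul_comm] at hv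
  have hμ : ∀ i, μ i ∈ Set.Icc (0 : ℝ) 1 := fun i =>
    hmean i 0 ▸ integral_mem_Icc_zero_one (hbd i 0)
  rw [integral_regret_eq hX hsu hKv]
  calc _ ≤ 4 * Real.sqrt (T * K * Real.log T) + T * P.real {ω | EmpMeansConcentrate T X μ ω}ᶜ :=
        integral_le_add_mul_measureReal_compl (measurableSet_empMeansConcentrate hX)
          (integrable_sum_gap_exploitRounds hsu) (by positivity)
          (fun ω hω => sum_gap_exploitRounds_le hsu hopt hω)
          (sum_gap_exploitRounds_le_of_gap_le_one fun a => by linarith [(hμ istar).2, (hμ a).1])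
    _ ≤ 4 * Real.sqrt (T * K * Real.log T) + K * Real.log T := by
        grw [← mul_exp_neg_eight_mul_log_le hT2, Set.compl_ofPred,
          measureReal_not_empMeansConcentrate_le (iIndepFun_samples hsu) hX hbd hmean]
    _ ≤ 4 * (Real.sqrt (T * K * Real.log T) + K * Real.log T) := by
        have : 0 ≤ (K : ℝ) * Real.log T := by positivity
        linarith
end

section
/- Let K ≤ L be positive integers, v = 1/L, S a K-element subset of {1,…,L}, and g : S → {1,…,K} a bijection. Let (i_t)_{t ≥ 1} be any sequence in {1,…,K} satisfying the strict-rate schedule: i_t = t for 1 ≤ t ≤ K, and for every t > K with t − K = (j−1)·L + s, s ∈ {1,…,L}, if s ∈ S then i_t = g(s) (the values of i_t at non-prescheduled rounds are arbitrary). Then for every arm a ∈ {1,…,K} and every integer t ≥ 1: #{s ≤ t : i_s = a} ≥ ⌊t·v⌋, and consequently the pulling rate satisfies #{s ≤ t : i_s = a}/t ≥ v − 1/t. -/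
/-!
Let `s_a ∈ S` be the offset with `g s_a = a`. Arm `a` is pulled at round `a + 1 ≤ K ≤ L` and
then at offset `s_a` of every block, i.e. at rounds `K + n L + s_a ≤ (n + 2) L`. So the `j`-th
pull of `a` happens no later than round `(j + 1) L`, which gives at least `⌊t / L⌋` pulls in the
first `t` rounds; the rate bound is then `⌊x⌋ > x - 1` divided by `t`.
-/

namespace FairBandit

/-- Block offset of a round `t > K`:  writing `t - K = (j-1)·L + s` with
`s ∈ {1, …, L}`, the offset is `s`. -/
def offset (K L t : ℕ) : ℕ := (t - K - 1) % L + 1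

end FairBandit

open FairBandit

open Finset

theorem div_le_card_filter_Icc {P : ℕ → Prop} [DecidablePred P] {f : ℕ → ℕ} {L : ℕ}
    (hf : StrictMono f) (hpos : ∀ j, 1 ≤ f j) (hle : ∀ j, f j ≤ (j + 1) * L)
    (hP : ∀ j, P (f j)) (t : ℕ) : t / L ≤ ((Icc 1 t).filter P).card := by
  have hmaps : ∀ j ∈ range (t / L), f j ∈ (Icc 1 t).filter P := by
    intro j hj
    have hjt : (j + 1) * L ≤ t :=
      (Nat.mul_le_mul_right L (mem_range.mp hj)).trans (Nat.div_mul_le_self t L)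
    exact mem_filter.mpr ⟨mem_Icc.mpr ⟨hpos j, (hle j).trans hjt⟩, hP j⟩
  simpa using card_le_card_of_injOn f hmaps hf.injective.injOn

theorem sub_one_div_le_div_of_floor_mul_le {t v : ℝ} {c : ℕ} (ht : 0 < t)
    (h : ⌊t * v⌋₊ ≤ c) : v - 1 / t ≤ c / t := by
  have hlt : t * v < c + 1 :=
    (Nat.lt_floor_add_one (t * v)).trans_le (by exact_mod_cast Nat.succ_le_succ h)
  rw [sub_le_iff_le_add, ← add_div, le_div_iff₀ ht]
  linarith

namespace FairBandit

theorem offset_add_mul_add {K L n s : ℕ} (hs1 : 1 ≤ s) (hsL : s ≤ L) :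
    offset K L (K + n * L + s) = s := by
  have hsub : K + n * L + s - K - 1 = s - 1 + n * L := by omega
  rw [offset, hsub, Nat.add_mul_mod_self_right, Nat.mod_eq_of_lt (by omega)]
  omega

def scheduledRound (r K L s : ℕ) : ℕ → ℕ
  | 0 => r
  | n + 1 => K + n * L + s

variable {r K L s : ℕ}

theorem scheduledRound_strictMono (hL : 0 < L) (hrK : r ≤ K) (hs : 1 ≤ s) :
    StrictMono (scheduledRound r K L s) := by
  refine strictMono_nat_of_lt_succ fun j => ?_
  cases j with
  | zero => simp only [scheduledRound]; omega
  | succ n =>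
    have : n * L < (n + 1) * L := Nat.mul_lt_mul_of_pos_right n.lt_succ_self hL
    simp only [scheduledRound]; omega

theorem one_le_scheduledRound (hr : 1 ≤ r) (hs : 1 ≤ s) (j : ℕ) :
    1 ≤ scheduledRound r K L s j := by
  cases j <;> simp only [scheduledRound] <;> omega

theorem scheduledRound_le (hrK : r ≤ K) (hKL : K ≤ L) (hsL : s ≤ L) (j : ℕ) :
    scheduledRound r K L s j ≤ (j + 1) * L := by
  cases j with
  | zero => simp only [scheduledRound]; omega
  | succ n =>
    have : (n + 1 + 1) * L = n * L + L + L := by ring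
    simp only [scheduledRound]; omega

end FairBandit

theorem strict_schedule_min_rate_general (K L : ℕ) (hKL : K ≤ L)
    (S : Finset ℕ) (g : ℕ → Fin K)
    (hS : S ⊆ Finset.Icc 1 L)
    (hg : Set.BijOn g ↑S (Set.univ : Set (Fin K)))
    (arm : ℕ → Fin K)
    (hinit : ∀ t, 1 ≤ t → t ≤ K → ((arm t : ℕ) = t - 1))
    (hsched : ∀ t, K < t → offset K L t ∈ S → arm t = g (offset K L t)) :
    ∀ (a : Fin K) (t : ℕ), 1 ≤ t →
      Nat.floor ((t : ℝ) * (1 / (L : ℝ))) ≤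
          ((Finset.Icc 1 t).filter (fun s => arm s = a)).card ∧
        1 / (L : ℝ) - 1 / (t : ℝ) ≤
          (((Finset.Icc 1 t).filter (fun s => arm s = a)).card : ℝ) / (t : ℝ) := by
  intro a t ht
  have ha : (a : ℕ) + 1 ≤ K := a.isLt
  have hL : 0 < L := by omega
  obtain ⟨sa, hsaS, hgsa⟩ := hg.surjOn (Set.mem_univ a)
  obtain ⟨hsa1, hsaL⟩ := mem_Icc.mp (hS hsaS)
  have hpulled : ∀ j, arm (scheduledRound (a + 1) K L sa j) = a := by
    rintro (_ | n)
    · show arm (a + 1) = a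
      exact Fin.ext (by simpa using hinit (a + 1) (by omega) ha)
    · have hoff : offset K L (K + n * L + sa) = sa := offset_add_mul_add hsa1 hsaL
      show arm (K + n * L + sa) = a
      rw [hsched _ (by omega) (by rwa [hoff]), hoff, hgsa]
  have hcount := div_le_card_filter_Icc (P := fun s => arm s = a)
    (scheduledRound_strictMono hL ha hsa1) (one_le_scheduledRound le_add_self hsa1)
    (scheduledRound_le ha hKL hsaL) hpulled t
  have hfloor : ⌊(t : ℝ) * (1 / (L : ℝ))⌋₊ ≤ ((Icc 1 t).filter (fun s => arm s = a)).card := by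
    rwa [mul_one_div, Nat.floor_div_natCast, Nat.floor_natCast]
  exact ⟨hfloor, sub_one_div_le_div_of_floor_mul_le (by exact_mod_cast ht) hfloor⟩

/-- Let `K ≤ L` be positive integers, `v = 1/L`, `S` a
`K`-element subset of `{1,…,L}` and `g : S → {1,…,K}` a bijection.  For any
sequence of arms following the strict-rate schedule (round `t` pulls arm `t`
for `t ≤ K`, and prescheduled rounds pull the prescheduled arm), every arm `a`
is pulled at least `⌊t·v⌋` times during the first `t` rounds, and hence its
pulling rate is at least `v - 1/t`. -/
theorem strict_schedule_min_rate (K L : ℕ) (hK : 0 < K) (hKL : K ≤ L)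
    (S : Finset ℕ) (g : ℕ → Fin K)
    (hS : S ⊆ Finset.Icc 1 L) (hScard : S.card = K)
    (hg : Set.BijOn g ↑S (Set.univ : Set (Fin K)))
    (arm : ℕ → Fin K)
    (hinit : ∀ t, 1 ≤ t → t ≤ K → ((arm t : ℕ) = t - 1))
    (hsched : ∀ t, K < t → offset K L t ∈ S → arm t = g (offset K L t)) :
    ∀ (a : Fin K) (t : ℕ), 1 ≤ t →
      Nat.floor ((t : ℝ) * (1 / (L : ℝ))) ≤
          ((Finset.Icc 1 t).filter (fun s => arm s = a)).card ∧
        1 / (L : ℝ) - 1 / (t : ℝ) ≤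
          (((Finset.Icc 1 t).filter (fun s => arm s = a)).card : ℝ) / (t : ℝ) :=
  strict_schedule_min_rate_general K L hKL S g hS hg arm hinit hsched
end

section
/- Let K < L be positive integers, v = 1/L, S a K-element subset of {1,…,L}, and g : S → {1,…,K} a bijection. Let (i_t)_{t ≥ 1} be any sequence in {1,…,K} satisfying the strict-rate schedule: i_t = t for 1 ≤ t ≤ K, and for every t > K with t − K = (j−1)·L + s, s ∈ {1,…,L}, if s ∈ S then i_t = g(s) (the values of i_t at non-prescheduled rounds are arbitrary). For an arm i and round t > K let n_{t−1}(i) = #{s ≤ t−1 : i_s = i} be the total number of pulls of arm i before round t and let m_{t−1}(i) be the number of pulls of arm i before round t occurring at non-prescheduled rounds. Then n_{t−1}(i) ≥ ⌊v·(t−1−K)⌋ + m_{t−1}(i) + 1, and consequently n_{t−1}(i) ≥ m_{t−1}(i)·(1 + v/(1 − K·v)). -/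
open FairBandit
open Finset

namespace FairBandit

theorem offset_mem_Icc {L : ℕ} (hL : 0 < L) (K s : ℕ) : offset K L s ∈ Icc 1 L :=
  mem_Icc.2 ⟨Nat.le_add_left _ _, Nat.mod_lt _ hL⟩

theorem card_filter_offset_eq_count (K L t : ℕ) (p : ℕ → Prop) [DecidablePred p] :
    #{s ∈ Icc (K + 1) (t - 1) | p (offset K L s)} =
      (t - 1 - K).count (fun u => p (u % L + 1)) := by
  rw [Nat.count_eq_card_filter_range]
  refine card_bij' (fun s _ => s - (K + 1)) (fun u _ => u + (K + 1)) ?_ ?_ ?_ ?_ <;>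
    simp only [mem_filter, mem_Icc, mem_range]
  · intro s hs
    exact ⟨by omega, by simpa only [offset, Nat.sub_sub] using hs.2⟩
  · intro u hu
    exact ⟨by omega, by simpa only [offset, Nat.sub_sub, Nat.add_sub_cancel] using hu.2⟩
  · omega
  · omega

theorem card_filter_offset_eq {K L r : ℕ} (hr : r ∈ Icc 1 L) (t : ℕ) :
    #{s ∈ Icc (K + 1) (t - 1) | offset K L s = r} =
      (t - 1 - K) / L + if r - 1 < (t - 1 - K) % L then 1 else 0 := by
  have hr' : r - 1 < L := by grind
  have hmodEq : (fun u => u % L + 1 = r) = (· ≡ r - 1 [MOD L]) := by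
    ext u
    rw [Nat.ModEq, Nat.mod_eq_of_lt hr']
    grind
  rw [card_filter_offset_eq_count K L t (· = r)]
  simp only [hmodEq]
  rw [Nat.count_modEq_card _ (by omega), Nat.mod_eq_of_lt hr']

theorem card_filter_offset_mem_le {L : ℕ} (hL : 0 < L) (K t : ℕ) (T : Finset ℕ) :
    #{s ∈ Icc (K + 1) (t - 1) | offset K L s ∈ T} ≤ ((t - 1 - K) / L + 1) * #T := by
  refine (card_le_mul_card_image _ _ fun r hr => ?_).trans
    (Nat.mul_le_mul_left _ (card_le_card (image_subset_iff.2 fun s hs => (mem_filter.1 hs).2)))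
  obtain ⟨s, -, rfl⟩ := mem_image.1 hr
  calc _ ≤ #{s' ∈ Icc (K + 1) (t - 1) | offset K L s' = offset K L s} :=
        card_le_card (filter_subset_filter _ (filter_subset _ _))
    _ ≤ (t - 1 - K) / L + 1 := by
        rw [card_filter_offset_eq (offset_mem_Icc hL K s)]
        split_ifs <;> omega

theorem card_filter_offset_notMem_le {L : ℕ} (hL : 0 < L) {S : Finset ℕ} (hS : S ⊆ Icc 1 L)
    (K t : ℕ) :
    #{s ∈ Icc (K + 1) (t - 1) | offset K L s ∉ S} ≤ ((t - 1 - K) / L + 1) * (L - #S) := by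
  have hcompl : ∀ s, offset K L s ∉ S ↔ offset K L s ∈ Icc 1 L \ S := fun s => by
    simp [mem_sdiff, offset_mem_Icc hL]
  rw [filter_congr fun s _ => hcompl s]
  simpa [card_sdiff_of_subset hS] using card_filter_offset_mem_le hL K t (Icc 1 L \ S)

theorem div_add_card_free_pulls_add_one_le {K L t s₀ : ℕ} {S : Finset ℕ}
    {g arm : ℕ → Fin K} (hS : S ⊆ Icc 1 L)
    (hinit : ∀ s, 1 ≤ s → s ≤ K → ((arm s : ℕ) = s - 1))
    (hsched : ∀ t, K < t → offset K L t ∈ S → arm t = g (offset K L t))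
    (hs₀ : s₀ ∈ S) (ht : K < t) :
    (t - 1 - K) / L + #{s ∈ Icc (K + 1) (t - 1) | offset K L s ∉ S ∧ arm s = g s₀} + 1 ≤
      #{s ∈ Icc 1 (t - 1) | arm s = g s₀} := by
  set i := g s₀
  set A := {s ∈ Icc (K + 1) (t - 1) | offset K L s = s₀}
  set B := {s ∈ Icc (K + 1) (t - 1) | offset K L s ∉ S ∧ arm s = i}
  have hfirst : (i : ℕ) + 1 ∈ Icc 1 K := mem_Icc.2 ⟨by omega, i.isLt⟩
  have hfirst_pull : arm ((i : ℕ) + 1) = i := by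
    have := hinit _ (mem_Icc.1 hfirst).1 (mem_Icc.1 hfirst).2
    exact Fin.ext (by omega)
  have hfirst_notMem : (i : ℕ) + 1 ∉ A ∪ B := by
    simp only [A, B, mem_union, mem_filter, mem_Icc]
    omega
  have hAB : Disjoint A B := disjoint_filter.2 fun s _ hA hB => hB.1 (hA ▸ hs₀)
  have hsub : insert ((i : ℕ) + 1) (A ∪ B) ⊆ {s ∈ Icc 1 (t - 1) | arm s = i} := by
    intro s hs
    simp only [A, B, mem_insert, mem_union, mem_filter, mem_Icc] at hs ⊢
    rcases hs with rfl | ⟨hs, hoff⟩ | ⟨hs, -, hpull⟩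
    · exact ⟨⟨by omega, by omega⟩, hfirst_pull⟩
    · exact ⟨⟨by omega, hs.2⟩, by rw [hsched s (by omega) (hoff ▸ hs₀), hoff]⟩
    · exact ⟨⟨by omega, hs.2⟩, hpull⟩
  calc (t - 1 - K) / L + #B + 1 ≤ #A + #B + 1 := by
        gcongr
        rw [card_filter_offset_eq (hS hs₀)]
        exact Nat.le_add_right _ _
    _ = #(insert ((i : ℕ) + 1) (A ∪ B)) := by
        rw [card_insert_of_notMem hfirst_notMem, card_union_of_disjoint hAB]
    _ ≤ _ := card_le_card hsub

theorem cast_mul_one_add_div_one_sub_le {K L q m n : ℕ} (hKL : K < L) (hn : q + m + 1 ≤ n)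
    (hm : m ≤ (q + 1) * (L - K)) :
    (m : ℝ) * (1 + (1 / (L : ℝ)) / (1 - (K : ℝ) * (1 / (L : ℝ)))) ≤ n := by
  have key : m * (L - K + 1) ≤ n * (L - K) := by
    calc m * (L - K + 1) = m * (L - K) + m := by ring
      _ ≤ m * (L - K) + (q + 1) * (L - K) := by omega
      _ = (q + m + 1) * (L - K) := by ring
      _ ≤ n * (L - K) := Nat.mul_le_mul_right _ hn
  have hLK : (0 : ℝ) < L - K := sub_pos.2 (by exact_mod_cast hKL)
  have hfactor :
      1 + (1 / (L : ℝ)) / (1 - (K : ℝ) * (1 / (L : ℝ))) = (L - K + 1) / (L - K) := by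
    have : (L : ℝ) ≠ 0 := by exact_mod_cast (by omega : L ≠ 0)
    field_simp
  rw [hfactor, ← mul_div_assoc, div_le_iff₀ hLK]
  have keyR : ((m * (L - K + 1) : ℕ) : ℝ) ≤ ((n * (L - K) : ℕ) : ℝ) := mod_cast key
  push_cast [Nat.cast_sub hKL.le] at keyR
  exact keyR

end FairBandit

theorem strict_schedule_pull_lower_bound_general (K L : ℕ) (hKL : K < L)
    (S : Finset ℕ) (g : ℕ → Fin K)
    (hS : S ⊆ Finset.Icc 1 L) (hScard : S.card = K)
    (hg : Set.BijOn g ↑S (Set.univ : Set (Fin K)))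
    (arm : ℕ → Fin K)
    (hinit : ∀ t, 1 ≤ t → t ≤ K → ((arm t : ℕ) = t - 1))
    (hsched : ∀ t, K < t → offset K L t ∈ S → arm t = g (offset K L t)) :
    ∀ (i : Fin K) (t : ℕ), K < t →
      Nat.floor ((1 / (L : ℝ)) * ((t : ℝ) - 1 - (K : ℝ))) +
          ((Finset.Icc (K + 1) (t - 1)).filter
            (fun s => offset K L s ∉ S ∧ arm s = i)).card + 1 ≤
        ((Finset.Icc 1 (t - 1)).filter (fun s => arm s = i)).card ∧
      (((Finset.Icc (K + 1) (t - 1)).filter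
            (fun s => offset K L s ∉ S ∧ arm s = i)).card : ℝ) *
          (1 + (1 / (L : ℝ)) / (1 - (K : ℝ) * (1 / (L : ℝ)))) ≤
        (((Finset.Icc 1 (t - 1)).filter (fun s => arm s = i)).card : ℝ) := by
  intro i t ht
  obtain ⟨s₀, hs₀, rfl⟩ := hg.surjOn (Set.mem_univ i)
  have hfloor : ⌊(1 / (L : ℝ)) * ((t : ℝ) - 1 - K)⌋₊ = (t - 1 - K) / L := by
    have hN : ((t - 1 - K : ℕ) : ℝ) = t - 1 - K := by
      rw [Nat.cast_sub (by omega), Nat.cast_sub (by omega), Nat.cast_one]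
    rw [← hN, one_div_mul_eq_div, Nat.floor_div_natCast, Nat.floor_natCast]
  have hpulls := div_add_card_free_pulls_add_one_le hS hinit hsched hs₀ ht
  have hfree : #{s ∈ Icc (K + 1) (t - 1) | offset K L s ∉ S ∧ arm s = g s₀} ≤
      ((t - 1 - K) / L + 1) * (L - K) := by
    have hnonS := card_filter_offset_notMem_le (by omega : 0 < L) hS K t
    rw [hScard] at hnonS
    exact (card_le_card (monotone_filter_right _ fun _ _ h => h.1)).trans hnonS
  exact ⟨hfloor ▸ hpulls, cast_mul_one_add_div_one_sub_le hKL hpulls hfree⟩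

/-- Let `K < L` be positive integers, `v = 1/L`, `S` a
`K`-element subset of `{1,…,L}` and `g : S → {1,…,K}` a bijection.  For any
sequence of arms following the strict-rate schedule, for every arm `i` and
round `t > K`, the total number `n_{t-1}(i)` of pulls of arm `i` before round
`t` and the number `m_{t-1}(i)` of those occurring at non-prescheduled rounds
satisfy `n_{t-1}(i) ≥ ⌊v·(t-1-K)⌋ + m_{t-1}(i) + 1`, and consequently
`n_{t-1}(i) ≥ m_{t-1}(i)·(1 + v/(1 - K·v))`. -/
theorem strict_schedule_pull_lower_bound (K L : ℕ) (hK : 0 < K) (hKL : K < L)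
    (S : Finset ℕ) (g : ℕ → Fin K)
    (hS : S ⊆ Finset.Icc 1 L) (hScard : S.card = K)
    (hg : Set.BijOn g ↑S (Set.univ : Set (Fin K)))
    (arm : ℕ → Fin K)
    (hinit : ∀ t, 1 ≤ t → t ≤ K → ((arm t : ℕ) = t - 1))
    (hsched : ∀ t, K < t → offset K L t ∈ S → arm t = g (offset K L t)) :
    ∀ (i : Fin K) (t : ℕ), K < t →
      Nat.floor ((1 / (L : ℝ)) * ((t : ℝ) - 1 - (K : ℝ))) +
          ((Finset.Icc (K + 1) (t - 1)).filter
            (fun s => offset K L s ∉ S ∧ arm s = i)).card + 1 ≤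
        ((Finset.Icc 1 (t - 1)).filter (fun s => arm s = i)).card ∧
      (((Finset.Icc (K + 1) (t - 1)).filter
            (fun s => offset K L s ∉ S ∧ arm s = i)).card : ℝ) *
          (1 + (1 / (L : ℝ)) / (1 - (K : ℝ) * (1 / (L : ℝ)))) ≤
        (((Finset.Icc 1 (t - 1)).filter (fun s => arm s = i)).card : ℝ) :=
  strict_schedule_pull_lower_bound_general K L hKL S g hS hScard hg arm hinit hsched
end
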